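/- Let G be a group acting by homeomorphisms on a topological space T, let M ⊆ T be a subset whose family of translates (g • M)_{g ∈ G} is locally finite, and let Γ = {g ∈ G | g • M = M} be the setwise stabilizer of M. Then for every t ∈ T, the set of Γ-orbits of points of M lying in the G-orbit of t, i.e. the set {Γ • m | m ∈ M and m ∈ G • t}, is finite. (This is the finite-fibers part of the paper's Lemma 3.1: the induced map M/Γ_M → T/G = 𝓜_{g,n} has finite fibers.) -/
import Mathlib

open Pointwise

/-- Finite-fibers part of Lemma 3.1: if the translates of `M` form a locally finite
family, then for every `t` the set of `Γ_M`-orbits of points of `M` lying in the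
`G`-orbit of `t` is finite. -/
theorem finite_stabilizer_orbits_in_fiber {G T : Type*} [Group G] [TopologicalSpace T]
    [MulAction G T] (hcont : ∀ g : G, Continuous fun x : T => g • x)
    (M : Set T) (hlf : LocallyFinite fun g : G => g • M) (t : T) :
    {S : Set T | ∃ m ∈ M, m ∈ MulAction.orbit G t ∧
      S = {y : T | ∃ γ : G, γ • M = M ∧ γ • m = y}}.Finite := by
  obtain ⟨U, hU, hfin⟩ := hlf t
  apply Set.Finite.subset
    (hfin.image (fun h => {y : T | ∃ γ : G, γ • M = M ∧ γ • (h⁻¹ • t) = y}))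
  rintro S ⟨m, hmM, ⟨g, rfl⟩, rfl⟩
  refine ⟨g⁻¹, ?_, ?_⟩
  · exact ⟨t, ⟨g • t, hmM, by simp⟩, mem_of_mem_nhds hU⟩
  · simp
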